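/- arXiv:2310.12460 — 9 statements merged into one kernel-verified Lean document; each statement's English description precedes it below -/
import Mathlib

section
/- Let Z = [M̂ E] be the p×(n) matrix obtained by column-binding M̂ and E, and assume Z^⊤Z is invertible. Then for every y ∈ ℝ^p, the first K entries of the ordinary least squares coefficient vector ψ̂ = (Z^⊤Z)⁻¹Z^⊤y coincide with A^⊤β̂, where β̂ = (X^⊤X)⁻¹X^⊤y; that is, A^⊤(X^⊤X)⁻¹X^⊤y = ((Z^⊤Z)⁻¹Z^⊤y)[1:K]. -/
/-!
Since `A (AᵀA)⁻¹ Aᵀ + N Nᵀ = 1`, the matrix `W = [A (AᵀA)⁻¹, N]` has the right inverse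
`V = [Aᵀ; Nᵀ]`, and `Z = X W`. Reparametrising a regression by a matrix with a right inverse
transforms its coefficients by that right inverse: `(ZᵀZ)⁻¹Zᵀ = V (XᵀX)⁻¹Xᵀ`. The first `K`
rows of `V` are `Aᵀ`.
-/

open Matrix

variable {R : Type*} [CommRing R] {m n l : Type*} [Fintype m] [Fintype n] [Fintype l]
  [DecidableEq n] [DecidableEq l]

noncomputable def olsCoef (X : Matrix m n R) : Matrix n m R := (Xᵀ * X)⁻¹ * Xᵀ

omit [DecidableEq l] in
theorem gram_mul_mul_of_mul_eq_one {X : Matrix m n R} {W : Matrix n l R} {V : Matrix l n R}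
    (hX : IsUnit (Xᵀ * X)) (hWV : W * V = 1) :
    (X * W)ᵀ * (X * W) * (V * olsCoef X) = (X * W)ᵀ := by
  have hXX : Xᵀ * X * (Xᵀ * X)⁻¹ = 1 := mul_nonsing_inv _ ((isUnit_iff_isUnit_det _).mp hX)
  calc (X * W)ᵀ * (X * W) * (V * olsCoef X)
      = Wᵀ * (Xᵀ * X * (Xᵀ * X)⁻¹) * Xᵀ * X * (W * V) * (Xᵀ * X)⁻¹ * Xᵀ := by
        rw [hXX, olsCoef, transpose_mul]; simp only [Matrix.mul_assoc, Matrix.one_mul]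
    _ = (X * W)ᵀ := by
        rw [hXX, hWV, transpose_mul]; simp only [Matrix.mul_one, Matrix.mul_assoc, hXX]

theorem olsCoef_mul_of_mul_eq_one {X : Matrix m n R} {W : Matrix n l R} {V : Matrix l n R}
    (hX : IsUnit (Xᵀ * X)) (hXW : IsUnit ((X * W)ᵀ * (X * W))) (hWV : W * V = 1) :
    olsCoef (X * W) = V * olsCoef X := by
  calc olsCoef (X * W)
      = ((X * W)ᵀ * (X * W))⁻¹ * ((X * W)ᵀ * (X * W) * (V * olsCoef X)) := by
        rw [gram_mul_mul_of_mul_eq_one hX hWV, olsCoef]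
    _ = V * olsCoef X := nonsing_inv_mul_cancel_left _ _ ((isUnit_iff_isUnit_det _).mp hXW)

theorem stmt_0_general (p n K : ℕ)
    (X : Matrix (Fin p) (Fin n) ℝ) (A : Matrix (Fin n) (Fin K) ℝ)
    (hX : IsUnit (Xᵀ * X))
    (N : Matrix (Fin n) (Fin (n - K)) ℝ)
    (hN2 : N * Nᵀ = 1 - A * (Aᵀ * A)⁻¹ * Aᵀ)
    (Z : Matrix (Fin p) (Fin K ⊕ Fin (n - K)) ℝ)
    (hZ : Z = Matrix.fromCols (X * A * (Aᵀ * A)⁻¹) (X * N))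
    (hZZ : IsUnit (Zᵀ * Z))
    (y : Fin p → ℝ) :
    ∀ k : Fin K,
      ((Aᵀ * (Xᵀ * X)⁻¹ * Xᵀ).mulVec y) k
        = (((Zᵀ * Z)⁻¹ * Zᵀ).mulVec y) (Sum.inl k) := by
  have hWV : fromCols (A * (Aᵀ * A)⁻¹) N * fromRows Aᵀ Nᵀ = 1 := by
    rw [fromCols_mul_fromRows, hN2, add_sub_cancel]
  have hZW : Z = X * fromCols (A * (Aᵀ * A)⁻¹) N := by
    rw [hZ, mul_fromCols, Matrix.mul_assoc]
  subst hZW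
  have hcoef := olsCoef_mul_of_mul_eq_one hX hZZ hWV
  rw [olsCoef, olsCoef] at hcoef
  intro k
  rw [hcoef, fromRows_mul, fromRows_mulVec, Sum.elim_inl, Matrix.mul_assoc]

/-- The first K entries of the OLS coefficient vector of `y` on `Z = [M̂ E]`
coincide with `Aᵀ β̂` where `β̂` is the OLS coefficient vector of `y` on `X`. -/
theorem stmt_0 (p n K : ℕ) (hK : 0 < K) (hKn : K ≤ n) (hnp : n < p)
    (X : Matrix (Fin p) (Fin n) ℝ) (A : Matrix (Fin n) (Fin K) ℝ)
    (hX : IsUnit (Xᵀ * X)) (hA : IsUnit (Aᵀ * A))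
    (N : Matrix (Fin n) (Fin (n - K)) ℝ)
    (hN1 : Nᵀ * N = 1) (hN2 : N * Nᵀ = 1 - A * (Aᵀ * A)⁻¹ * Aᵀ)
    (Z : Matrix (Fin p) (Fin K ⊕ Fin (n - K)) ℝ)
    (hZ : Z = Matrix.fromCols (X * A * (Aᵀ * A)⁻¹) (X * N))
    (hZZ : IsUnit (Zᵀ * Z))
    (y : Fin p → ℝ) :
    ∀ k : Fin K,
      ((Aᵀ * (Xᵀ * X)⁻¹ * Xᵀ).mulVec y) k
        = (((Zᵀ * Z)⁻¹ * Zᵀ).mulVec y) (Sum.inl k) :=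
  stmt_0_general p n K X A hX N hN2 Z hZ hZZ y
end

section
/- For each γ > 0 the matrix Σ̂_γ = S + γ I_p is positive definite and M̂^⊤Σ̂_γ⁻¹M̂ is invertible, and the feasible GLS estimate θ̂_γ = (M̂^⊤Σ̂_γ⁻¹M̂)⁻¹M̂^⊤Σ̂_γ⁻¹y converges, as γ → 0⁺, to the RTS estimate θ̂_RTS = A^⊤(X^⊤X)⁻¹X^⊤y, for every fixed y ∈ ℝ^p. -/
/-!
The GLS matrix `G = (Mᵀ Ω⁻¹ M)⁻¹ Mᵀ Ω⁻¹` is the unique left inverse of `M` with `G Ω = C Mᵀ` for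
some `C`; in particular it does not change when a term `M C Mᵀ` is added to `Ω`. With
`B = A (AᵀA)⁻¹` we have `M̂ = X B`, `P_A = B (AᵀA) Bᵀ` and
`Xᵀ Σ̂_γ = (XᵀX) (I - P_A + γ (XᵀX)⁻¹) Xᵀ`, so the feasible GLS matrix equals
`gls B (I + γ (XᵀX)⁻¹) · (XᵀX)⁻¹ Xᵀ`. Unlike `Σ̂_γ⁻¹`, this is continuous at `γ = 0`, where
`gls B I = Aᵀ`.
-/

open Matrix Filter Topology

section GLS

variable {m k 𝕜 : Type*} [Fintype m] [Fintype k] [DecidableEq m] [DecidableEq k] [Field 𝕜]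

noncomputable def gls (M : Matrix m k 𝕜) (Ω : Matrix m m 𝕜) : Matrix k m 𝕜 :=
  (Mᵀ * Ω⁻¹ * M)⁻¹ * (Mᵀ * Ω⁻¹)

variable {M : Matrix m k 𝕜} {Ω : Matrix m m 𝕜}

lemma gls_mul (h : IsUnit (Mᵀ * Ω⁻¹ * M)) : gls M Ω * M = 1 := by
  rw [gls, Matrix.mul_assoc]
  exact nonsing_inv_mul _ ((isUnit_iff_isUnit_det _).mp h)

lemma gls_mul_cov (hΩ : IsUnit Ω) : gls M Ω * Ω = (Mᵀ * Ω⁻¹ * M)⁻¹ * Mᵀ := by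
  simp only [gls, Matrix.mul_assoc, nonsing_inv_mul _ ((isUnit_iff_isUnit_det _).mp hΩ),
    Matrix.mul_one]

lemma eq_gls_of_mul_eq (hΩ : IsUnit Ω) {G : Matrix k m 𝕜} {C : Matrix k k 𝕜} (hGM : G * M = 1)
    (hGΩ : G * Ω = C * Mᵀ) : G = gls M Ω := by
  have hG : G = C * (Mᵀ * Ω⁻¹) := by
    rw [← Matrix.mul_assoc, ← hGΩ, Matrix.mul_assoc,
      mul_nonsing_inv _ ((isUnit_iff_isUnit_det _).mp hΩ), Matrix.mul_one]
  have hC : (Mᵀ * Ω⁻¹ * M)⁻¹ = C := by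
    apply inv_eq_left_inv
    rw [← Matrix.mul_assoc, ← hG, hGM]
  rw [gls, hC, hG]

lemma continuousAt_matrix_inv_of_isUnit {ι : Type*} [Fintype ι] [DecidableEq ι]
    [TopologicalSpace 𝕜] [IsTopologicalDivisionRing 𝕜] {N : Matrix ι ι 𝕜}
    (hN : IsUnit N) : ContinuousAt Inv.inv N := by
  refine continuousAt_matrix_inv N ?_
  rw [Ring.inverse_eq_inv']
  exact continuousAt_inv₀ ((isUnit_iff_isUnit_det _).mp hN).ne_zero

lemma continuousAt_gls [TopologicalSpace 𝕜] [IsTopologicalDivisionRing 𝕜]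
    (M : Matrix m k 𝕜) (hΩ : IsUnit Ω) (h : IsUnit (Mᵀ * Ω⁻¹ * M)) :
    ContinuousAt (gls M) Ω := by
  have hmul : Continuous fun P : Matrix k k 𝕜 × Matrix k m 𝕜 => P.1 * P.2 :=
    continuous_fst.matrix_mul continuous_snd
  have hleft : Continuous fun N : Matrix m m 𝕜 => Mᵀ * N :=
    continuous_const.matrix_mul continuous_id
  have hgram : ContinuousAt (fun N : Matrix m m 𝕜 => (Mᵀ * N * M)⁻¹) Ω⁻¹ :=
    (continuousAt_matrix_inv_of_isUnit h).comp (f := fun N => Mᵀ * N * M)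
      (hleft.matrix_mul continuous_const).continuousAt
  exact (hmul.continuousAt.comp (hgram.prodMk hleft.continuousAt)).comp
    (continuousAt_matrix_inv_of_isUnit hΩ)

end GLS

lemma isUnit_transpose_mul_inv_mul {m k : Type*} [Fintype m] [Fintype k] [DecidableEq m]
    [DecidableEq k] {Ω : Matrix m m ℝ} (hΩ : Ω.PosDef) {M : Matrix m k ℝ}
    (hM : Function.Injective M.mulVec) : IsUnit (Mᵀ * Ω⁻¹ * M) := by
  simpa only [conjTranspose_eq_transpose_of_trivial] using
    (hΩ.inv.conjTranspose_mul_mul_same hM).isUnit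

section Gram

variable {m n : Type*} [Fintype m] [Fintype n] [DecidableEq n] {A : Matrix m n ℝ}

lemma mulVec_injective_of_isUnit_transpose_mul (hA : IsUnit (Aᵀ * A)) :
    Function.Injective A.mulVec := by
  refine Function.Injective.of_comp (f := Aᵀ.mulVec) ?_
  simpa only [Function.comp_def, mulVec_mulVec] using mulVec_injective_of_isUnit hA

lemma posDef_transpose_mul_self (hA : IsUnit (Aᵀ * A)) : (Aᵀ * A).PosDef := by
  simpa only [conjTranspose_eq_transpose_of_trivial] using
    PosDef.conjTranspose_mul_self A (mulVec_injective_of_isUnit_transpose_mul hA)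

lemma transpose_inv_transpose_mul_self : ((Aᵀ * A)⁻¹)ᵀ = (Aᵀ * A)⁻¹ := by
  rw [transpose_nonsing_inv, transpose_mul, transpose_transpose]

lemma transpose_mul_mul_inv_transpose_mul_self (hA : IsUnit (Aᵀ * A)) :
    Aᵀ * (A * (Aᵀ * A)⁻¹) = 1 := by
  rw [← Matrix.mul_assoc, mul_nonsing_inv _ ((isUnit_iff_isUnit_det _).mp hA)]

lemma mulVec_injective_mul_inv_transpose_mul_self (hA : IsUnit (Aᵀ * A)) :
    Function.Injective (A * (Aᵀ * A)⁻¹).mulVec :=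
  Function.LeftInverse.injective (g := Aᵀ.mulVec) fun v => by
    rw [mulVec_mulVec, transpose_mul_mul_inv_transpose_mul_self hA, one_mulVec]

variable [DecidableEq m]

lemma posSemidef_one_sub_proj (hA : IsUnit (Aᵀ * A)) :
    (1 - A * (Aᵀ * A)⁻¹ * Aᵀ).PosSemidef := by
  set Q := 1 - A * (Aᵀ * A)⁻¹ * Aᵀ
  have hQt : Qᵀ = Q := by
    rw [transpose_sub, transpose_one, transpose_mul, transpose_mul, transpose_transpose,
      transpose_inv_transpose_mul_self, ← Matrix.mul_assoc]
  have hQQ : Q * Q = Q := by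
    have hP : A * (Aᵀ * A)⁻¹ * Aᵀ * (A * (Aᵀ * A)⁻¹ * Aᵀ) = A * (Aᵀ * A)⁻¹ * Aᵀ := by
      rw [Matrix.mul_assoc (A * _), ← Matrix.mul_assoc Aᵀ,
        transpose_mul_mul_inv_transpose_mul_self hA, Matrix.one_mul]
    simp only [Q, Matrix.sub_mul, Matrix.mul_sub, Matrix.one_mul, Matrix.mul_one, hP, sub_self,
      sub_zero]
  have h := posSemidef_conjTranspose_mul_self Q
  rwa [conjTranspose_eq_transpose_of_trivial, hQt, hQQ] at h

lemma gls_mul_inv_transpose_mul_self_one (hA : IsUnit (Aᵀ * A)) :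
    gls (A * (Aᵀ * A)⁻¹) 1 = Aᵀ := by
  refine (eq_gls_of_mul_eq isUnit_one (C := Aᵀ * A)
    (transpose_mul_mul_inv_transpose_mul_self hA) ?_).symm
  rw [Matrix.mul_one, transpose_mul, transpose_inv_transpose_mul_self, ← Matrix.mul_assoc,
    mul_nonsing_inv _ ((isUnit_iff_isUnit_det _).mp hA), Matrix.one_mul]

end Gram

section Regression

variable {m n k : Type*} [Fintype m] [Fintype n] [Fintype k] [DecidableEq m] [DecidableEq n]
  [DecidableEq k] {X : Matrix m n ℝ} {A : Matrix n k ℝ}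

noncomputable def regularizedCov (X : Matrix m n ℝ) (A : Matrix n k ℝ) (γ : ℝ) : Matrix m m ℝ :=
  X * (1 - A * (Aᵀ * A)⁻¹ * Aᵀ) * Xᵀ + γ • 1

lemma posDef_regularizedCov (hA : IsUnit (Aᵀ * A)) (X : Matrix m n ℝ) {γ : ℝ} (hγ : 0 < γ) :
    (regularizedCov X A γ).PosDef := by
  have h : (X * (1 - A * (Aᵀ * A)⁻¹ * Aᵀ) * Xᵀ).PosSemidef := by
    simpa only [conjTranspose_eq_transpose_of_trivial] using
      (posSemidef_one_sub_proj hA).mul_mul_conjTranspose_same X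
  exact PosDef.posSemidef_add h (PosDef.one.smul hγ)

lemma gls_regularizedCov (hX : IsUnit (Xᵀ * X)) (hA : IsUnit (Aᵀ * A)) {γ : ℝ} (hγ : 0 < γ) :
    gls (X * (A * (Aᵀ * A)⁻¹)) (regularizedCov X A γ) =
      gls (A * (Aᵀ * A)⁻¹) (1 + γ • (Xᵀ * X)⁻¹) * ((Xᵀ * X)⁻¹ * Xᵀ) := by
  set B := A * (Aᵀ * A)⁻¹
  set L := 1 + γ • (Xᵀ * X)⁻¹
  have hL : L.PosDef :=
    PosDef.one.add_posSemidef ((posDef_transpose_mul_self hX).inv.posSemidef.smul hγ.le)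
  have hHB : gls B L * B = 1 :=
    gls_mul (isUnit_transpose_mul_inv_mul hL (mulVec_injective_mul_inv_transpose_mul_self hA))
  have hWX : (Xᵀ * X)⁻¹ * Xᵀ * X = 1 := by
    rw [Matrix.mul_assoc, nonsing_inv_mul _ ((isUnit_iff_isUnit_det _).mp hX)]
  have hproj : A * (Aᵀ * A)⁻¹ * Aᵀ = B * (Aᵀ * A) * Bᵀ := by
    rw [Matrix.mul_assoc _ (Aᵀ * A), transpose_mul, transpose_inv_transpose_mul_self,
      ← Matrix.mul_assoc (Aᵀ * A), mul_nonsing_inv _ ((isUnit_iff_isUnit_det _).mp hA),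
      Matrix.one_mul]
  have hreduce : (Xᵀ * X)⁻¹ * Xᵀ * regularizedCov X A γ = (L - B * (Aᵀ * A) * Bᵀ) * Xᵀ := by
    rw [regularizedCov, ← hproj]
    simp only [L, Matrix.mul_add, Matrix.mul_smul, Matrix.mul_one, ← Matrix.mul_assoc, hWX,
      Matrix.one_mul, Matrix.add_mul, Matrix.sub_mul, Matrix.smul_mul]
    abel
  refine (eq_gls_of_mul_eq (posDef_regularizedCov hA X hγ).isUnit
    (C := (Bᵀ * L⁻¹ * B)⁻¹ - Aᵀ * A) ?_ ?_).symm
  · rw [Matrix.mul_assoc, ← Matrix.mul_assoc _ X, hWX, Matrix.one_mul, hHB]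
  · rw [Matrix.mul_assoc, hreduce, ← Matrix.mul_assoc, Matrix.mul_sub, gls_mul_cov hL.isUnit,
      ← Matrix.mul_assoc (gls B L) (B * (Aᵀ * A)), ← Matrix.mul_assoc (gls B L) B, hHB,
      Matrix.one_mul, ← Matrix.sub_mul, transpose_mul X, Matrix.mul_assoc]

lemma tendsto_gls_regularizedCov (hX : IsUnit (Xᵀ * X)) (hA : IsUnit (Aᵀ * A)) :
    Tendsto (fun γ => gls (X * (A * (Aᵀ * A)⁻¹)) (regularizedCov X A γ)) (𝓝[>] 0)
      (𝓝 (Aᵀ * (Xᵀ * X)⁻¹ * Xᵀ)) := by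
  have hgram : IsUnit ((A * (Aᵀ * A)⁻¹)ᵀ * (1 : Matrix n n ℝ)⁻¹ * (A * (Aᵀ * A)⁻¹)) :=
    isUnit_transpose_mul_inv_mul .one (mulVec_injective_mul_inv_transpose_mul_self hA)
  have hcont : ContinuousAt (gls (A * (Aᵀ * A)⁻¹)) 1 := continuousAt_gls _ isUnit_one hgram
  have hpert : Tendsto (fun γ : ℝ => 1 + γ • (Xᵀ * X)⁻¹) (𝓝[>] 0) (𝓝 1) := by
    have h : Continuous fun γ : ℝ => 1 + γ • (Xᵀ * X)⁻¹ := by fun_prop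
    simpa using (h.tendsto 0).mono_left nhdsWithin_le_nhds
  have hlim := hcont.tendsto.comp hpert
  rw [gls_mul_inv_transpose_mul_self_one hA] at hlim
  rw [Matrix.mul_assoc]
  refine (((continuous_id.matrix_mul continuous_const).tendsto _).comp hlim).congr' ?_
  filter_upwards [self_mem_nhdsWithin] with γ hγ
  exact (gls_regularizedCov hX hA hγ).symm

end Regression

theorem stmt_1_general (p n K : ℕ)
    (X : Matrix (Fin p) (Fin n) ℝ) (A : Matrix (Fin n) (Fin K) ℝ)
    (hX : IsUnit (Xᵀ * X)) (hA : IsUnit (Aᵀ * A))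
    (M : Matrix (Fin p) (Fin K) ℝ) (hM : M = X * A * (Aᵀ * A)⁻¹)
    (S : Matrix (Fin p) (Fin p) ℝ)
    (hS : S = X * (1 - A * (Aᵀ * A)⁻¹ * Aᵀ) * Xᵀ)
    (Sg : ℝ → Matrix (Fin p) (Fin p) ℝ)
    (hSg : ∀ γ : ℝ, Sg γ = S + γ • (1 : Matrix (Fin p) (Fin p) ℝ))
    (y : Fin p → ℝ) :
    (∀ γ : ℝ, 0 < γ → (Sg γ).PosDef ∧ IsUnit (Mᵀ * (Sg γ)⁻¹ * M)) ∧
      Filter.Tendsto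
        (fun γ : ℝ => ((Mᵀ * (Sg γ)⁻¹ * M)⁻¹ * (Mᵀ * (Sg γ)⁻¹)).mulVec y)
        (nhdsWithin 0 (Set.Ioi 0))
        (nhds ((Aᵀ * (Xᵀ * X)⁻¹ * Xᵀ).mulVec y)) := by
  have hSg' : Sg = regularizedCov X A := funext fun γ => by rw [hSg, hS, regularizedCov]
  rw [Matrix.mul_assoc] at hM
  subst hM hSg'
  have hinj : Function.Injective (X * (A * (Aᵀ * A)⁻¹)).mulVec := by
    simpa only [Function.comp_def, mulVec_mulVec] using
      (mulVec_injective_of_isUnit_transpose_mul hX).comp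
        (mulVec_injective_mul_inv_transpose_mul_self hA)
  refine ⟨fun γ hγ => ⟨posDef_regularizedCov hA X hγ,
    isUnit_transpose_mul_inv_mul (posDef_regularizedCov hA X hγ) hinj⟩, ?_⟩
  exact ((continuous_id.matrix_mulVec continuous_const).tendsto _).comp
    (tendsto_gls_regularizedCov hX hA)

/-- For each γ > 0 the matrix `Σ̂_γ = S + γ I` is positive definite and
`M̂ᵀ Σ̂_γ⁻¹ M̂` is invertible, and the feasible GLS estimate tends, as γ → 0⁺,
to the RTS estimate `Aᵀ (XᵀX)⁻¹ Xᵀ y`. -/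
theorem stmt_1 (p n K : ℕ) (hK : 0 < K) (hKn : K ≤ n) (hnp : n < p)
    (X : Matrix (Fin p) (Fin n) ℝ) (A : Matrix (Fin n) (Fin K) ℝ)
    (hX : IsUnit (Xᵀ * X)) (hA : IsUnit (Aᵀ * A))
    (M : Matrix (Fin p) (Fin K) ℝ) (hM : M = X * A * (Aᵀ * A)⁻¹)
    (S : Matrix (Fin p) (Fin p) ℝ)
    (hS : S = X * (1 - A * (Aᵀ * A)⁻¹ * Aᵀ) * Xᵀ)
    (Sg : ℝ → Matrix (Fin p) (Fin p) ℝ)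
    (hSg : ∀ γ : ℝ, Sg γ = S + γ • (1 : Matrix (Fin p) (Fin p) ℝ))
    (y : Fin p → ℝ) :
    (∀ γ : ℝ, 0 < γ → (Sg γ).PosDef ∧ IsUnit (Mᵀ * (Sg γ)⁻¹ * M)) ∧
      Filter.Tendsto
        (fun γ : ℝ => ((Mᵀ * (Sg γ)⁻¹ * M)⁻¹ * (Mᵀ * (Sg γ)⁻¹)).mulVec y)
        (nhdsWithin 0 (Set.Ioi 0))
        (nhds ((Aᵀ * (Xᵀ * X)⁻¹ * Xᵀ).mulVec y)) :=
  stmt_1_general p n K X A hX hA M hM S hS Sg hSg y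
end

section
/- Assume E^⊤E is invertible and set P_E = E(E^⊤E)⁻¹E^⊤, and assume M̂^⊤(I_p − P_E)M̂ is invertible. Then for every y ∈ ℝ^p, the RTS estimate satisfies A^⊤(X^⊤X)⁻¹X^⊤y = (M̂^⊤(I_p − P_E)M̂)⁻¹ M̂^⊤(I_p − P_E) y. -/
open Matrix

/-- The RTS estimate `Aᵀ(XᵀX)⁻¹Xᵀ y` equals the feasible GLS-type estimate
`(M̂ᵀ(I − P_E)M̂)⁻¹ M̂ᵀ(I − P_E) y` where `P_E = E(EᵀE)⁻¹Eᵀ`. -/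
theorem stmt_3 (p n K : ℕ) (hK : 0 < K) (hKn : K ≤ n) (hnp : n < p)
    (X : Matrix (Fin p) (Fin n) ℝ) (A : Matrix (Fin n) (Fin K) ℝ)
    (hX : IsUnit (Xᵀ * X)) (hA : IsUnit (Aᵀ * A))
    (N : Matrix (Fin n) (Fin (n - K)) ℝ)
    (hN1 : Nᵀ * N = 1) (hN2 : N * Nᵀ = 1 - A * (Aᵀ * A)⁻¹ * Aᵀ)
    (M : Matrix (Fin p) (Fin K) ℝ) (hM : M = X * A * (Aᵀ * A)⁻¹)
    (E : Matrix (Fin p) (Fin (n - K)) ℝ) (hE : E = X * N)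
    (hEE : IsUnit (Eᵀ * E))
    (PE : Matrix (Fin p) (Fin p) ℝ) (hPE : PE = E * (Eᵀ * E)⁻¹ * Eᵀ)
    (hMM : IsUnit (Mᵀ * (1 - PE) * M))
    (y : Fin p → ℝ) :
    (Aᵀ * (Xᵀ * X)⁻¹ * Xᵀ).mulVec y
      = ((Mᵀ * (1 - PE) * M)⁻¹ * (Mᵀ * (1 - PE))).mulVec y := by
  have hXd := (Matrix.isUnit_iff_isUnit_det _).mp hX
  have hEd := (Matrix.isUnit_iff_isUnit_det _).mp hEE
  have hMd := (Matrix.isUnit_iff_isUnit_det _).mp hMM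
  have hXX2 : (Xᵀ * X) * (Xᵀ * X)⁻¹ = 1 := Matrix.mul_nonsing_inv _ hXd
  have hEE1 : (Eᵀ * E)⁻¹ * (Eᵀ * E) = 1 := Matrix.nonsing_inv_mul _ hEd
  -- absorption by the projector onto the column space of X
  have habs : ∀ {m : ℕ} (D : Matrix (Fin m) (Fin p) ℝ) (C : Matrix (Fin m) (Fin n) ℝ),
      D = C * Xᵀ → D * (X * (Xᵀ * X)⁻¹ * Xᵀ) = D := by
    intro m D C hC
    subst hC
    calc C * Xᵀ * (X * (Xᵀ * X)⁻¹ * Xᵀ)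
        = C * ((Xᵀ * X) * (Xᵀ * X)⁻¹) * Xᵀ := by
          simp only [Matrix.mul_assoc]
      _ = C * Xᵀ := by rw [hXX2, Matrix.mul_one]
  have hPEE : PE * E = E := by
    rw [hPE]
    simp only [Matrix.mul_assoc]
    rw [hEE1, Matrix.mul_one]
  have hPEE0 : (1 - PE) * E = 0 := by
    rw [Matrix.sub_mul, Matrix.one_mul, hPEE, sub_self]
  have hMA : M * Aᵀ = X - E * Nᵀ := by
    rw [hM, hE, Matrix.mul_assoc X N, hN2, Matrix.mul_sub, Matrix.mul_one,
      sub_sub_cancel]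
    simp only [Matrix.mul_assoc]
  have hstep : (1 - PE) * (M * Aᵀ) = (1 - PE) * X := by
    rw [hMA, Matrix.mul_sub, ← Matrix.mul_assoc, hPEE0, Matrix.zero_mul, sub_zero]
  have hMabs : Mᵀ * (X * (Xᵀ * X)⁻¹ * Xᵀ) = Mᵀ := by
    apply habs Mᵀ (((Aᵀ * A)⁻¹)ᵀ * Aᵀ)
    rw [hM]
    simp [Matrix.transpose_mul, Matrix.mul_assoc]
  have hMPEabs : (Mᵀ * PE) * (X * (Xᵀ * X)⁻¹ * Xᵀ) = Mᵀ * PE := by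
    apply habs (Mᵀ * PE) (Mᵀ * (E * (Eᵀ * E)⁻¹) * Nᵀ)
    rw [hPE, hE]
    simp [Matrix.transpose_mul, Matrix.mul_assoc]
  have hkey : (Mᵀ * (1 - PE) * M) * (Aᵀ * (Xᵀ * X)⁻¹ * Xᵀ) = Mᵀ * (1 - PE) := by
    calc (Mᵀ * (1 - PE) * M) * (Aᵀ * (Xᵀ * X)⁻¹ * Xᵀ)
        = Mᵀ * ((1 - PE) * (M * Aᵀ)) * ((Xᵀ * X)⁻¹ * Xᵀ) := by
          simp only [Matrix.mul_assoc]
      _ = Mᵀ * ((1 - PE) * X) * ((Xᵀ * X)⁻¹ * Xᵀ) := by rw [hstep]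
      _ = (Mᵀ - Mᵀ * PE) * (X * (Xᵀ * X)⁻¹ * Xᵀ) := by
          simp only [Matrix.sub_mul, Matrix.mul_sub, Matrix.one_mul, Matrix.mul_assoc]
      _ = Mᵀ - Mᵀ * PE := by
          rw [Matrix.sub_mul, hMabs, hMPEabs]
      _ = Mᵀ * (1 - PE) := by rw [Matrix.mul_sub, Matrix.mul_one]
  have hmat : Aᵀ * (Xᵀ * X)⁻¹ * Xᵀ = (Mᵀ * (1 - PE) * M)⁻¹ * (Mᵀ * (1 - PE)) := by
    calc Aᵀ * (Xᵀ * X)⁻¹ * Xᵀ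
        = ((Mᵀ * (1 - PE) * M)⁻¹ * (Mᵀ * (1 - PE) * M)) * (Aᵀ * (Xᵀ * X)⁻¹ * Xᵀ) := by
          rw [Matrix.nonsing_inv_mul _ hMd, Matrix.one_mul]
      _ = (Mᵀ * (1 - PE) * M)⁻¹ * ((Mᵀ * (1 - PE) * M) * (Aᵀ * (Xᵀ * X)⁻¹ * Xᵀ)) := by
          rw [Matrix.mul_assoc]
      _ = (Mᵀ * (1 - PE) * M)⁻¹ * (Mᵀ * (1 - PE)) := by rw [hkey]
  rw [hmat]
end

section
/- For each γ > 0 the matrices Σ̂_{0γ} and M̂₀^⊤Σ̂_{0γ}⁻¹M̂₀ are invertible, and the feasible predictor ŷ'_γ = M̂' θ̂_{0γ} + Δ̂^⊤ Σ̂_{0γ}⁻¹ (y₀ − M̂₀ θ̂_{0γ}), where θ̂_{0γ} = (M̂₀^⊤Σ̂_{0γ}⁻¹M̂₀)⁻¹M̂₀^⊤Σ̂_{0γ}⁻¹y₀, converges as γ → ∞ to M̂'(M̂₀^⊤M̂₀)⁻¹M̂₀^⊤y₀ for every fixed y₀ ∈ ℝ^{p−q}. -/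
/-!
Since `Σ̂_{0γ} = γ (I + γ⁻¹ S)` with `S = X₀ (I - P_A) X₀ᵀ ⪰ 0`, and the GLS coefficient
`(Mᵀ W M)⁻¹ Mᵀ W` does not change when the weight `W` is scaled, `θ̂_{0γ}` is the GLS estimate with
weight `γ Σ̂_{0γ}⁻¹ → I`. By continuity of inversion at the invertible `M̂₀ᵀ M̂₀` it tends to the
OLS estimate `(M̂₀ᵀ M̂₀)⁻¹ M̂₀ᵀ y₀`, while `Σ̂_{0γ}⁻¹ → 0` kills the correction term.
Invertibility for `γ > 0` holds because `M̂₀` has the left inverse `Aᵀ (X₀ᵀ X₀)⁻¹ X₀ᵀ`.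
-/

open Matrix Filter Topology

theorem Matrix.inv_smul_of_ne_zero {m K : Type*} [Fintype m] [DecidableEq m] [Field K]
    (A : Matrix m m K) {c : K} (hc : c ≠ 0) : (c • A)⁻¹ = c⁻¹ • A⁻¹ := by
  by_cases hA : IsUnit A.det
  · exact inv_smul' A (Units.mk0 c hc) hA
  · have hcA : ¬IsUnit (c • A).det := by
      rwa [det_smul, IsUnit.mul_iff, not_and_or, or_iff_right (by simp [hc])]
    rw [nonsing_inv_apply_not_isUnit _ hA, nonsing_inv_apply_not_isUnit _ hcA, smul_zero]

section Projection

variable {n k R : Type*} [Fintype n] [Fintype k] [DecidableEq k] [CommRing R]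

theorem transpose_projection (A : Matrix n k R) :
    (A * (Aᵀ * A)⁻¹ * Aᵀ)ᵀ = A * (Aᵀ * A)⁻¹ * Aᵀ := by
  simp [transpose_mul, transpose_nonsing_inv, Matrix.mul_assoc]

theorem projection_mul_self {A : Matrix n k R} (hA : IsUnit (Aᵀ * A)) :
    A * (Aᵀ * A)⁻¹ * Aᵀ * (A * (Aᵀ * A)⁻¹ * Aᵀ) = A * (Aᵀ * A)⁻¹ * Aᵀ := by
  rw [Matrix.mul_assoc (A * _), ← Matrix.mul_assoc Aᵀ, ← Matrix.mul_assoc Aᵀ,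
    mul_nonsing_inv _ ((isUnit_iff_isUnit_det _).mp hA), Matrix.one_mul]

end Projection

theorem posSemidef_one_sub_projection {n k : Type*} [Fintype n] [Fintype k] [DecidableEq n]
    [DecidableEq k] {A : Matrix n k ℝ} (hA : IsUnit (Aᵀ * A)) :
    (1 - A * (Aᵀ * A)⁻¹ * Aᵀ).PosSemidef := by
  set P := A * (Aᵀ * A)⁻¹ * Aᵀ
  have hsq : (1 - P)ᴴ * (1 - P) = 1 - P := by
    rw [conjTranspose_eq_transpose_of_trivial, transpose_sub, transpose_one,
      transpose_projection, sub_mul, mul_sub, mul_sub, projection_mul_self hA]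
    simp
  exact hsq ▸ posSemidef_conjTranspose_mul_self (1 - P)

theorem Matrix.mulVec_injective_of_mul_eq_one {m n R : Type*} [Fintype m] [Fintype n]
    [DecidableEq n] [CommSemiring R] {B : Matrix m n R} {C : Matrix n m R} (h : C * B = 1) :
    Function.Injective B.mulVec := fun x y hxy => by
  simpa [mulVec_mulVec, h] using congrArg (C *ᵥ ·) hxy

section GLS

variable {l m k : Type*} [Fintype m] [Fintype k] [DecidableEq k]

noncomputable def glsEstimator (M : Matrix m k ℝ) (W : Matrix m m ℝ) : Matrix k m ℝ :=
  (Mᵀ * W * M)⁻¹ * (Mᵀ * W)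

theorem glsEstimator_smul (M : Matrix m k ℝ) (W : Matrix m m ℝ) {c : ℝ} (hc : c ≠ 0) :
    glsEstimator M (c • W) = glsEstimator M W := by
  simp only [glsEstimator, Matrix.mul_smul, Matrix.smul_mul, inv_smul_of_ne_zero _ hc, smul_smul,
    mul_inv_cancel₀ hc, one_smul]

theorem glsEstimator_one [DecidableEq m] (M : Matrix m k ℝ) :
    glsEstimator M 1 = (Mᵀ * M)⁻¹ * Mᵀ := by
  simp [glsEstimator]

theorem continuousAt_glsEstimator (M : Matrix m k ℝ) {W : Matrix m m ℝ}
    (hW : IsUnit (Mᵀ * W * M).det) : ContinuousAt (glsEstimator M) W := by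
  have hinv : ContinuousAt (fun V : Matrix m m ℝ => (Mᵀ * V * M)⁻¹) W :=
    (continuousAt_matrix_inv _ (by
      rw [Ring.inverse_eq_inv']; exact continuousAt_inv₀ hW.ne_zero)).comp
      ((continuous_const.matrix_mul continuous_id).matrix_mul continuous_const).continuousAt
  exact (continuous_fst.matrix_mul continuous_snd).continuousAt.comp
    (hinv.prodMk (continuous_const.matrix_mul continuous_id).continuousAt)

theorem tendsto_smul_inv_add_smul_one [DecidableEq m] (S : Matrix m m ℝ) :
    Tendsto (fun γ : ℝ => γ • (S + γ • 1)⁻¹) atTop (𝓝 1) := by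
  have hcont : ContinuousAt (fun t : ℝ => (t • S + 1)⁻¹) 0 := by
    refine (continuousAt_matrix_inv _ ?_).comp (by fun_prop)
    simp [Ring.inverse_eq_inv']
  have hlim : Tendsto (fun γ : ℝ => (γ⁻¹ • S + 1)⁻¹) atTop (𝓝 1) := by
    simpa [Function.comp_def] using hcont.tendsto.comp tendsto_inv_atTop_zero
  refine hlim.congr' ((eventually_gt_atTop 0).mono fun γ hγ => ?_)
  have hfac : S + γ • 1 = γ • (γ⁻¹ • S + 1) := by
    rw [smul_add, smul_smul, mul_inv_cancel₀ hγ.ne', one_smul]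
  simp only [hfac, inv_smul_of_ne_zero _ hγ.ne', smul_smul,
    mul_inv_cancel₀ hγ.ne', one_smul]

theorem tendsto_inv_add_smul_one [DecidableEq m] (S : Matrix m m ℝ) :
    Tendsto (fun γ : ℝ => (S + γ • 1)⁻¹) atTop (𝓝 0) := by
  have hlim := tendsto_inv_atTop_zero.smul (tendsto_smul_inv_add_smul_one S)
  rw [zero_smul] at hlim
  refine hlim.congr' ((eventually_ne_atTop 0).mono fun γ hγ => ?_)
  simp only [smul_smul, inv_mul_cancel₀ hγ, one_smul]

theorem tendsto_glsEstimator_inv_add_smul_one [DecidableEq m] {M : Matrix m k ℝ}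
    (hM : IsUnit (Mᵀ * M).det) (S : Matrix m m ℝ) :
    Tendsto (fun γ : ℝ => glsEstimator M (S + γ • 1)⁻¹) atTop (𝓝 (glsEstimator M 1)) := by
  have hcont := continuousAt_glsEstimator M (W := 1) (by simpa using hM)
  refine (hcont.tendsto.comp (tendsto_smul_inv_add_smul_one S)).congr'
    ((eventually_ne_atTop 0).mono fun γ hγ => ?_)
  exact glsEstimator_smul M _ hγ

theorem tendsto_feasiblePredictor [DecidableEq m] {M₀ : Matrix m k ℝ} (hM₀ : IsUnit (M₀ᵀ * M₀).det)
    (M' : Matrix l k ℝ) (D : Matrix l m ℝ) (S : Matrix m m ℝ) (y₀ : m → ℝ) :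
    Tendsto (fun γ : ℝ =>
        let θ₀ := glsEstimator M₀ (S + γ • 1)⁻¹ *ᵥ y₀
        M' *ᵥ θ₀ + (D * (S + γ • 1)⁻¹) *ᵥ (y₀ - M₀ *ᵥ θ₀))
      atTop (𝓝 ((M' * glsEstimator M₀ 1) *ᵥ y₀)) := by
  let Φ : Matrix k m ℝ × Matrix m m ℝ → (l → ℝ) := fun p =>
    M' *ᵥ (p.1 *ᵥ y₀) + (D * p.2) *ᵥ (y₀ - M₀ *ᵥ (p.1 *ᵥ y₀))
  have hΦ : Continuous Φ := by fun_prop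
  have h := (hΦ.tendsto _).comp ((tendsto_glsEstimator_inv_add_smul_one hM₀ S).prodMk_nhds
    (tendsto_inv_add_smul_one S))
  simpa [Φ, Function.comp_def, mulVec_mulVec] using h

end GLS

theorem stmt_5_general (p n K q : ℕ)
    (X₀ : Matrix (Fin (p - q)) (Fin n) ℝ)
    (A : Matrix (Fin n) (Fin K) ℝ)
    (hX₀ : IsUnit (X₀ᵀ * X₀)) (hA : IsUnit (Aᵀ * A))
    (M₀ : Matrix (Fin (p - q)) (Fin K) ℝ) (hM₀ : M₀ = X₀ * A * (Aᵀ * A)⁻¹)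
    (M' : Matrix (Fin q) (Fin K) ℝ)
    (Sg : ℝ → Matrix (Fin (p - q)) (Fin (p - q)) ℝ)
    (hSg : ∀ γ : ℝ, Sg γ = X₀ * (1 - A * (Aᵀ * A)⁻¹ * Aᵀ) * X₀ᵀ
      + γ • (1 : Matrix (Fin (p - q)) (Fin (p - q)) ℝ))
    (Dt : Matrix (Fin q) (Fin (p - q)) ℝ)
    (y₀ : Fin (p - q) → ℝ) :
    (∀ γ : ℝ, 0 < γ → (Sg γ).PosDef ∧ IsUnit (M₀ᵀ * (Sg γ)⁻¹ * M₀)) ∧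
      Filter.Tendsto
        (fun γ : ℝ =>
          let θ₀ : Fin K → ℝ := ((M₀ᵀ * (Sg γ)⁻¹ * M₀)⁻¹ * (M₀ᵀ * (Sg γ)⁻¹)).mulVec y₀
          M'.mulVec θ₀ + (Dt * (Sg γ)⁻¹).mulVec (y₀ - M₀.mulVec θ₀))
        Filter.atTop
        (nhds ((M' * (M₀ᵀ * M₀)⁻¹ * M₀ᵀ).mulVec y₀)) := by
  obtain rfl : Sg = _ := funext hSg
  have hM₀inj : Function.Injective M₀.mulVec := by
    refine mulVec_injective_of_mul_eq_one (C := Aᵀ * (X₀ᵀ * X₀)⁻¹ * X₀ᵀ) ?_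
    simp only [hM₀, Matrix.mul_assoc]
    rw [← Matrix.mul_assoc X₀ᵀ X₀,
      nonsing_inv_mul_cancel_left _ _ ((isUnit_iff_isUnit_det _).mp hX₀), ← Matrix.mul_assoc,
      mul_nonsing_inv _ ((isUnit_iff_isUnit_det _).mp hA)]
  have hS : (X₀ * (1 - A * (Aᵀ * A)⁻¹ * Aᵀ) * X₀ᵀ).PosSemidef :=
    conjTranspose_eq_transpose_of_trivial X₀ ▸
      (posSemidef_one_sub_projection hA).mul_mul_conjTranspose_same X₀
  refine ⟨fun γ hγ => ?_, ?_⟩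
  · have hpd := PosDef.posSemidef_add hS (PosDef.one.smul hγ)
    refine ⟨hpd, ?_⟩
    exact conjTranspose_eq_transpose_of_trivial M₀ ▸
      (hpd.inv.conjTranspose_mul_mul_same hM₀inj).isUnit
  · have hdet : IsUnit (M₀ᵀ * M₀).det := (isUnit_iff_isUnit_det _).mp
      (conjTranspose_eq_transpose_of_trivial M₀ ▸
        (PosDef.conjTranspose_mul_self M₀ hM₀inj).isUnit)
    have h := tendsto_feasiblePredictor hdet M' Dt (X₀ * (1 - A * (Aᵀ * A)⁻¹ * Aᵀ) * X₀ᵀ) y₀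
    rw [glsEstimator_one, ← Matrix.mul_assoc] at h
    exact h

/-- For each γ > 0 the matrices `Σ̂_{0γ}` and `M̂₀ᵀ Σ̂_{0γ}⁻¹ M̂₀` are invertible,
and the feasible predictor `ŷ'_γ` tends, as γ → ∞, to the ATR predictor
`M̂'(M̂₀ᵀM̂₀)⁻¹M̂₀ᵀ y₀`. -/
theorem stmt_5 (p n K q : ℕ) (hK : 0 < K) (hq : 0 < q) (hKn : K ≤ n)
    (hnpq : n < p - q)
    (X₀ : Matrix (Fin (p - q)) (Fin n) ℝ) (X' : Matrix (Fin q) (Fin n) ℝ)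
    (A : Matrix (Fin n) (Fin K) ℝ)
    (hX₀ : IsUnit (X₀ᵀ * X₀)) (hA : IsUnit (Aᵀ * A))
    (M₀ : Matrix (Fin (p - q)) (Fin K) ℝ) (hM₀ : M₀ = X₀ * A * (Aᵀ * A)⁻¹)
    (M' : Matrix (Fin q) (Fin K) ℝ) (hM' : M' = X' * A * (Aᵀ * A)⁻¹)
    (Sg : ℝ → Matrix (Fin (p - q)) (Fin (p - q)) ℝ)
    (hSg : ∀ γ : ℝ, Sg γ = X₀ * (1 - A * (Aᵀ * A)⁻¹ * Aᵀ) * X₀ᵀ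
      + γ • (1 : Matrix (Fin (p - q)) (Fin (p - q)) ℝ))
    (Dt : Matrix (Fin q) (Fin (p - q)) ℝ)
    (hDt : Dt = X' * (1 - A * (Aᵀ * A)⁻¹ * Aᵀ) * X₀ᵀ)
    (y₀ : Fin (p - q) → ℝ) :
    (∀ γ : ℝ, 0 < γ → (Sg γ).PosDef ∧ IsUnit (M₀ᵀ * (Sg γ)⁻¹ * M₀)) ∧
      Filter.Tendsto
        (fun γ : ℝ =>
          let θ₀ : Fin K → ℝ := ((M₀ᵀ * (Sg γ)⁻¹ * M₀)⁻¹ * (M₀ᵀ * (Sg γ)⁻¹)).mulVec y₀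
          M'.mulVec θ₀ + (Dt * (Sg γ)⁻¹).mulVec (y₀ - M₀.mulVec θ₀))
        Filter.atTop
        (nhds ((M' * (M₀ᵀ * M₀)⁻¹ * M₀ᵀ).mulVec y₀)) :=
  stmt_5_general p n K q X₀ A hX₀ hA M₀ hM₀ M' Sg hSg Dt y₀
end

section
/- Define V₁ = A^⊤(X^⊤X)⁻¹A − (M̂^⊤M̂)⁻¹ and V₂ = (M̂^⊤M̂)⁻¹M̂^⊤SM̂(M̂^⊤M̂)⁻¹, and assume V₁ and V₂ are symmetric positive definite. Then for every γ > 0, the Loewner inequality γ·A^⊤(X^⊤X)⁻¹A ⪯ V₂ + γ·(M̂^⊤M̂)⁻¹ (i.e., the variance of the RTS estimate is dominated by the variance of the ATR estimate in the idealized source apportionment model) holds if and only if γ ≤ λ_min(V₁^{−1/2} V₂ V₁^{−1/2}), where V₁^{1/2} is the positive-definite square root of V₁ and λ_min denotes the smallest eigenvalue of a symmetric matrix; this λ_min equals the smallest eigenvalue of V₁⁻¹V₂. -/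
/-!
Since `V₁ = Aᵀ(XᵀX)⁻¹A − (M̂ᵀM̂)⁻¹`, the Loewner inequality says `V₂ − γ V₁ ⪰ 0`. With
`V₁ = R²`, congruence by `R⁻¹ = V₁^{-1/2}` turns this into `W − γ I ⪰ 0` for
`W = R⁻¹ V₂ R⁻¹`, i.e. `γ ≤ λ_min(W)`. Finally `V₁⁻¹ V₂ = R⁻¹ W R` is similar to `W`,
so both have the same real spectrum, whose least element is `λ_min(W)`.
-/

open Matrix
open scoped ComplexOrder

namespace Matrix

variable {n 𝕜 : Type*} [Fintype n] [DecidableEq n] [RCLike 𝕜]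

theorem IsHermitian.posSemidef_sub_smul_one_iff {W : Matrix n n 𝕜} (hW : W.IsHermitian)
    (γ : ℝ) :
    (W - γ • 1).PosSemidef ↔ ∀ i, γ ≤ hW.eigenvalues i := by
  have hshift : W - γ • 1 = Unitary.conjStarAlgAut 𝕜 _ hW.eigenvectorUnitary
      (diagonal (RCLike.ofReal ∘ (hW.eigenvalues - Function.const n γ))) := by
    conv_lhs => rw [hW.spectral_theorem, RCLike.real_smul_eq_coe_smul (K := 𝕜),
      ← map_one (Unitary.conjStarAlgAut 𝕜 _ hW.eigenvectorUnitary)]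
    rw [← map_smul, ← map_sub]
    congr 1
    ext i j
    by_cases h : i = j <;> simp [h, diagonal_apply_ne, one_apply_ne, Algebra.algebraMap_eq_smul_one]
  rw [hshift, Unitary.conjStarAlgAut_apply, Unitary.isUnit_coe.posSemidef_star_right_conjugate_iff,
    posSemidef_diagonal_iff]
  simp

theorem PosDef.posSemidef_sub_smul_mul_self_iff {R V : Matrix n n 𝕜} (hR : R.PosDef)
    (hW : (R⁻¹ * V * R⁻¹).IsHermitian) (γ : ℝ) :
    (V - γ • (R * R)).PosSemidef ↔ ∀ i, γ ≤ hW.eigenvalues i := by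
  have hRu := hR.isUnit
  have hdet := (isUnit_iff_isUnit_det R).mp hRu
  have hconj : V - γ • (R * R) = star R * (R⁻¹ * V * R⁻¹ - γ • 1) * R := by
    rw [star_eq_conjTranspose, hR.isHermitian.eq, Matrix.mul_sub, Matrix.sub_mul]
    simp [Matrix.mul_assoc, nonsing_inv_mul R hdet, Matrix.mul_nonsing_inv_cancel_left R V hdet]
  rw [hconj, hRu.posSemidef_star_left_conjugate_iff, hW.posSemidef_sub_smul_one_iff]

theorem spectrum_mul_self_inv_mul {α : Type*} [CommRing α] {P V : Matrix n n α} (hP : IsUnit P) :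
    spectrum α ((P * P)⁻¹ * V) = spectrum α (P⁻¹ * V * P⁻¹) := by
  lift P to (Matrix n n α)ˣ using hP
  rw [← spectrum.units_conjugate (u := P)]
  congr 1
  simp [Matrix.mul_assoc, Matrix.mul_inv_rev]

end Matrix

theorem stmt_6_general (p n K : ℕ) (hK : 0 < K)
    (X : Matrix (Fin p) (Fin n) ℝ) (A : Matrix (Fin n) (Fin K) ℝ)
    (M : Matrix (Fin p) (Fin K) ℝ)
    (V₁ V₂ : Matrix (Fin K) (Fin K) ℝ)
    (hV₁def : V₁ = Aᵀ * (Xᵀ * X)⁻¹ * A - (Mᵀ * M)⁻¹)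
    (R : Matrix (Fin K) (Fin K) ℝ) (hR : R.PosDef) (hRsq : R * R = V₁)
    (hW : (R⁻¹ * V₂ * R⁻¹).IsHermitian) :
    (∀ γ : ℝ, 0 < γ →
      ((V₂ + γ • (Mᵀ * M)⁻¹ - γ • (Aᵀ * (Xᵀ * X)⁻¹ * A)).PosSemidef ↔
        γ ≤ ⨅ i, hW.eigenvalues i)) ∧
    IsLeast (spectrum ℝ (V₁⁻¹ * V₂)) (⨅ i, hW.eigenvalues i) := by
  have : Nonempty (Fin K) := Fin.pos_iff_nonempty.mp hK
  have hfin := Set.finite_range hW.eigenvalues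
  refine ⟨fun γ _ ↦ ?_, ?_⟩
  · have hloewner :
        V₂ + γ • (Mᵀ * M)⁻¹ - γ • (Aᵀ * (Xᵀ * X)⁻¹ * A) = V₂ - γ • (R * R) := by
      rw [hRsq, hV₁def, smul_sub]
      abel
    rw [hloewner, hR.posSemidef_sub_smul_mul_self_iff hW, le_ciInf_iff hfin.bddBelow]
  · rw [← hRsq, spectrum_mul_self_inv_mul hR.isUnit, hW.spectrum_real_eq_range_eigenvalues]
    exact ⟨(Set.range_nonempty _).csInf_mem hfin,
      fun _ ⟨i, hi⟩ ↦ hi ▸ ciInf_le hfin.bddBelow i⟩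

/-- With `V₁ = Aᵀ(XᵀX)⁻¹A − (M̂ᵀM̂)⁻¹` and `V₂ = (M̂ᵀM̂)⁻¹M̂ᵀSM̂(M̂ᵀM̂)⁻¹` both
symmetric positive definite, for every γ > 0 the Loewner inequality
`γ·Aᵀ(XᵀX)⁻¹A ⪯ V₂ + γ·(M̂ᵀM̂)⁻¹` holds iff `γ ≤ λ_min(V₁^{-1/2} V₂ V₁^{-1/2})`,
and this `λ_min` is the smallest eigenvalue of `V₁⁻¹V₂` (least element of its
real spectrum). Here `R` is the positive-definite square root of `V₁`. -/
theorem stmt_6 (p n K : ℕ) (hK : 0 < K) (hKn : K ≤ n) (hnp : n < p)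
    (X : Matrix (Fin p) (Fin n) ℝ) (A : Matrix (Fin n) (Fin K) ℝ)
    (hX : IsUnit (Xᵀ * X)) (hA : IsUnit (Aᵀ * A))
    (M : Matrix (Fin p) (Fin K) ℝ) (hM : M = X * A * (Aᵀ * A)⁻¹)
    (S : Matrix (Fin p) (Fin p) ℝ)
    (hS : S = X * (1 - A * (Aᵀ * A)⁻¹ * Aᵀ) * Xᵀ)
    (V₁ V₂ : Matrix (Fin K) (Fin K) ℝ)
    (hV₁def : V₁ = Aᵀ * (Xᵀ * X)⁻¹ * A - (Mᵀ * M)⁻¹)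
    (hV₂def : V₂ = (Mᵀ * M)⁻¹ * Mᵀ * S * M * (Mᵀ * M)⁻¹)
    (hV₁ : V₁.PosDef) (hV₂ : V₂.PosDef)
    (R : Matrix (Fin K) (Fin K) ℝ) (hR : R.PosDef) (hRsq : R * R = V₁)
    (hW : (R⁻¹ * V₂ * R⁻¹).IsHermitian) :
    (∀ γ : ℝ, 0 < γ →
      ((V₂ + γ • (Mᵀ * M)⁻¹ - γ • (Aᵀ * (Xᵀ * X)⁻¹ * A)).PosSemidef ↔
        γ ≤ ⨅ i, hW.eigenvalues i)) ∧
    IsLeast (spectrum ℝ (V₁⁻¹ * V₂)) (⨅ i, hW.eigenvalues i) :=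
  stmt_6_general p n K hK X A M V₁ V₂ hV₁def R hR hRsq hW
end

section
/- Let Σ be a real symmetric positive semidefinite p×p matrix, M a real p×K matrix, and θ ∈ ℝ^K. Let a_k denote the k-th column of A. Let U₂ be a real p×K matrix with orthonormal columns whose column span equals the column span of X(X^⊤X)⁻¹A, and let U₃ be a real p×(p−n) matrix with orthonormal columns satisfying U₃U₃^⊤ = I_p − X(X^⊤X)⁻¹X^⊤. Define v_k = ‖θ‖² · a_k^⊤(X^⊤X)⁻¹X^⊤ Σ X(X^⊤X)⁻¹a_k and w_k = a_k^⊤(X^⊤X)⁻¹a_k · [‖θ‖² · trace(U₃^⊤ Σ U₃) + θ^⊤M^⊤U₃U₃^⊤Mθ] / (p−n). Then for every k, v_k − w_k ≤ ‖θ‖² · a_k^⊤(X^⊤X)⁻¹a_k · [λ_max(U₂^⊤ Σ U₂) − trace(U₃^⊤ Σ U₃)/(p−n)], where λ_max denotes the largest eigenvalue of a symmetric matrix. -/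
/-!
Write `a = a_k`, `P = (XᵀX)⁻¹` and `b = X P a`. Then `aᵀ P a = ‖b‖²` and
`aᵀ P Xᵀ Σ X P a = bᵀ Σ b`, and `b = X P A e_k` lies in the column span of `U₂`, say `b = U₂ y` with
`‖y‖ = ‖b‖`. The Rayleigh bound for the symmetric matrix `U₂ᵀ Σ U₂` gives
`bᵀ Σ b = yᵀ (U₂ᵀ Σ U₂) y ≤ λ_max ‖b‖²`, i.e. `v_k ≤ ‖θ‖² aᵀ P a λ_max`. What `w_k` adds to the
subtracted term is `aᵀ P a ‖U₃ᵀ M θ‖² / (p - n) ≥ 0`.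
-/

open Matrix

section QuadraticForm

variable {R m l : Type*} [CommRing R] [Fintype m] [Fintype l]

theorem dotProduct_transpose_mul_mul_mulVec (S : Matrix m m R) (N : Matrix m l R) (u v : l → R) :
    u ⬝ᵥ (Nᵀ * S * N) *ᵥ v = (N *ᵥ u) ⬝ᵥ S *ᵥ (N *ᵥ v) := by
  rw [← mulVec_mulVec, ← mulVec_mulVec, dotProduct_mulVec, vecMul_transpose]

theorem dotProduct_transpose_mul_self_mulVec (N : Matrix m l R) (u v : l → R) :
    u ⬝ᵥ (Nᵀ * N) *ᵥ v = (N *ᵥ u) ⬝ᵥ (N *ᵥ v) := by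
  rw [← mulVec_mulVec, dotProduct_mulVec, vecMul_transpose]

end QuadraticForm

section Rayleigh

open scoped MatrixOrder Matrix.Norms.L2Operator

variable {l : Type*} [Fintype l] [DecidableEq l]

theorem Matrix.IsHermitian.dotProduct_mulVec_le_iSup_eigenvalues_mul {B : Matrix l l ℝ}
    (hB : B.IsHermitian) (y : l → ℝ) :
    y ⬝ᵥ B *ᵥ y ≤ (⨆ i, hB.eigenvalues i) * (y ⬝ᵥ y) := by
  have hle : B ≤ algebraMap ℝ _ (⨆ i, hB.eigenvalues i) := by
    refine le_algebraMap_of_spectrum_le fun x hx => ?_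
    rw [hB.spectrum_real_eq_range_eigenvalues] at hx
    obtain ⟨i, rfl⟩ := hx
    exact le_ciSup (Set.finite_range _).bddAbove i
  have := (Matrix.le_iff.mp hle).dotProduct_mulVec_nonneg y
  rw [Algebra.algebraMap_eq_smul_one, sub_mulVec, smul_mulVec, one_mulVec, dotProduct_sub,
    dotProduct_smul, smul_eq_mul] at this
  simpa only [star_trivial, sub_nonneg] using this

theorem dotProduct_mulVec_le_of_mem_range_of_orthonormal {m : Type*} [Fintype m]
    (S : Matrix m m ℝ) {U : Matrix m l ℝ} (hU : Uᵀ * U = 1) (hH : (Uᵀ * S * U).IsHermitian) {b : m → ℝ}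
    (hb : b ∈ LinearMap.range U.mulVecLin) :
    b ⬝ᵥ S *ᵥ b ≤ (⨆ i, hH.eigenvalues i) * (b ⬝ᵥ b) := by
  obtain ⟨y, rfl⟩ := hb
  rw [mulVecLin_apply, ← dotProduct_transpose_mul_mul_mulVec,
    ← dotProduct_transpose_mul_self_mulVec, hU, one_mulVec]
  exact hH.dotProduct_mulVec_le_iSup_eigenvalues_mul y

end Rayleigh

section LeastSquares

variable {R m n : Type*} [CommRing R] [Fintype m] [Fintype n] [DecidableEq n]

theorem transpose_mul_inv_transpose_mul_self (X : Matrix m n R) :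
    (X * (Xᵀ * X)⁻¹)ᵀ = (Xᵀ * X)⁻¹ * Xᵀ := by
  rw [transpose_mul, transpose_nonsing_inv, transpose_mul, transpose_transpose]

theorem gram_mul_inv_transpose_mul_self {X : Matrix m n R} (hX : IsUnit (Xᵀ * X)) :
    (X * (Xᵀ * X)⁻¹)ᵀ * (X * (Xᵀ * X)⁻¹) = (Xᵀ * X)⁻¹ := by
  rw [transpose_mul_inv_transpose_mul_self, Matrix.mul_assoc, ← Matrix.mul_assoc Xᵀ,
    ← Matrix.mul_assoc, nonsing_inv_mul _ ((isUnit_iff_isUnit_det _).mp hX), Matrix.one_mul]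

end LeastSquares

theorem stmt_8_general (p n K : ℕ) (hnp : n < p)
    (X : Matrix (Fin p) (Fin n) ℝ) (A : Matrix (Fin n) (Fin K) ℝ)
    (hX : IsUnit (Xᵀ * X))
    (Sg : Matrix (Fin p) (Fin p) ℝ)
    (M : Matrix (Fin p) (Fin K) ℝ)
    (θ : EuclideanSpace ℝ (Fin K))
    (U₂ : Matrix (Fin p) (Fin K) ℝ) (hU₂o : U₂ᵀ * U₂ = 1)
    (hU₂span : LinearMap.range (Matrix.mulVecLin U₂)
      = LinearMap.range (Matrix.mulVecLin (X * (Xᵀ * X)⁻¹ * A)))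
    (U₃ : Matrix (Fin p) (Fin (p - n)) ℝ)
    (hH : (U₂ᵀ * Sg * U₂).IsHermitian) :
    ∀ k : Fin K,
      ‖θ‖ ^ 2 * ((fun i => A i k) ⬝ᵥ
          ((Xᵀ * X)⁻¹ * Xᵀ * Sg * X * (Xᵀ * X)⁻¹).mulVec (fun i => A i k))
        - ((fun i => A i k) ⬝ᵥ ((Xᵀ * X)⁻¹).mulVec (fun i => A i k)) *
          (‖θ‖ ^ 2 * (U₃ᵀ * Sg * U₃).trace
            + θ ⬝ᵥ (Mᵀ * U₃ * U₃ᵀ * M).mulVec θ) / ((p : ℝ) - (n : ℝ))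
      ≤ ‖θ‖ ^ 2 * ((fun i => A i k) ⬝ᵥ ((Xᵀ * X)⁻¹).mulVec (fun i => A i k)) *
          ((⨆ i, hH.eigenvalues i) - (U₃ᵀ * Sg * U₃).trace / ((p : ℝ) - (n : ℝ))) := by
  intro k
  set a : Fin n → ℝ := fun i => A i k
  set b := (X * (Xᵀ * X)⁻¹) *ᵥ a
  have hc : a ⬝ᵥ (Xᵀ * X)⁻¹ *ᵥ a = b ⬝ᵥ b := by
    rw [← gram_mul_inv_transpose_mul_self hX, dotProduct_transpose_mul_self_mulVec]
  have hV : a ⬝ᵥ ((Xᵀ * X)⁻¹ * Xᵀ * Sg * X * (Xᵀ * X)⁻¹) *ᵥ a = b ⬝ᵥ Sg *ᵥ b := by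
    rw [← dotProduct_transpose_mul_mul_mulVec, transpose_mul_inv_transpose_mul_self]
    simp only [Matrix.mul_assoc]
  have hb : b ∈ LinearMap.range U₂.mulVecLin := by
    rw [hU₂span]
    exact ⟨Pi.single k 1, by rw [mulVecLin_apply, ← mulVec_mulVec, mulVec_single_one]; rfl⟩
  have hRayleigh := dotProduct_mulVec_le_of_mem_range_of_orthonormal Sg hU₂o hH hb
  have hq : 0 ≤ θ ⬝ᵥ (Mᵀ * U₃ * U₃ᵀ * M) *ᵥ θ := by
    rw [show Mᵀ * U₃ * U₃ᵀ * M = (U₃ᵀ * M)ᵀ * (U₃ᵀ * M) by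
        rw [transpose_mul, transpose_transpose]; simp only [Matrix.mul_assoc],
      dotProduct_transpose_mul_self_mulVec]
    exact dotProduct_star_self_nonneg _
  have hbb : 0 ≤ b ⬝ᵥ b := dotProduct_star_self_nonneg b
  have hd : (0 : ℝ) < p - n := sub_pos.mpr (by exact_mod_cast hnp)
  rw [hV, hc]
  linear_combination mul_le_mul_of_nonneg_left hRayleigh (sq_nonneg ‖θ‖)
    + div_nonneg (mul_nonneg hbb hq) hd.le

/-- Upper bound on the bias `v_k − w_k` of the RTS squared standard errors in
the general source apportionment model. -/
theorem stmt_8 (p n K : ℕ) (hK : 0 < K) (hKn : K ≤ n) (hnp : n < p)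
    (X : Matrix (Fin p) (Fin n) ℝ) (A : Matrix (Fin n) (Fin K) ℝ)
    (hX : IsUnit (Xᵀ * X)) (hA : IsUnit (Aᵀ * A))
    (Sg : Matrix (Fin p) (Fin p) ℝ) (hSg : Sg.PosSemidef)
    (M : Matrix (Fin p) (Fin K) ℝ)
    (θ : EuclideanSpace ℝ (Fin K))
    (U₂ : Matrix (Fin p) (Fin K) ℝ) (hU₂o : U₂ᵀ * U₂ = 1)
    (hU₂span : LinearMap.range (Matrix.mulVecLin U₂)
      = LinearMap.range (Matrix.mulVecLin (X * (Xᵀ * X)⁻¹ * A)))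
    (U₃ : Matrix (Fin p) (Fin (p - n)) ℝ) (hU₃o : U₃ᵀ * U₃ = 1)
    (hU₃ : U₃ * U₃ᵀ = 1 - X * (Xᵀ * X)⁻¹ * Xᵀ)
    (hH : (U₂ᵀ * Sg * U₂).IsHermitian) :
    ∀ k : Fin K,
      ‖θ‖ ^ 2 * ((fun i => A i k) ⬝ᵥ
          ((Xᵀ * X)⁻¹ * Xᵀ * Sg * X * (Xᵀ * X)⁻¹).mulVec (fun i => A i k))
        - ((fun i => A i k) ⬝ᵥ ((Xᵀ * X)⁻¹).mulVec (fun i => A i k)) *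
          (‖θ‖ ^ 2 * (U₃ᵀ * Sg * U₃).trace
            + θ ⬝ᵥ (Mᵀ * U₃ * U₃ᵀ * M).mulVec θ) / ((p : ℝ) - (n : ℝ))
      ≤ ‖θ‖ ^ 2 * ((fun i => A i k) ⬝ᵥ ((Xᵀ * X)⁻¹).mulVec (fun i => A i k)) *
          ((⨆ i, hH.eigenvalues i) - (U₃ᵀ * Sg * U₃).trace / ((p : ℝ) - (n : ℝ))) :=
  stmt_8_general p n K hnp X A hX Sg M θ U₂ hU₂o hU₂span U₃ hH
end

section
/- The Loewner inequality (M̂^⊤M̂)⁻¹ ⪯ A^⊤(X^⊤X)⁻¹A holds; that is, A^⊤(X^⊤X)⁻¹A − ((A(A^⊤A)⁻¹)^⊤X^⊤X A(A^⊤A)⁻¹)⁻¹ is positive semidefinite. -/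
/-!
Put `S = XᵀX` and `B = A(AᵀA)⁻¹`, so that `AᵀB = 1` and `M̂ᵀM̂ = BᵀSB =: C`.
For `M = A - SBC⁻¹` the cross terms collapse and `MᵀS⁻¹M = AᵀS⁻¹A - C⁻¹`,
which is positive semidefinite because `S⁻¹` is.
-/

open Matrix
open scoped ComplexOrder

namespace Matrix

variable {𝕜 m k : Type*} [RCLike 𝕜] [Fintype m] [Fintype k] [DecidableEq m] [DecidableEq k]

lemma PosDef.posSemidef_conjTranspose_mul_inv_mul_sub_inv {S : Matrix m m 𝕜} (hS : S.PosDef)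
    {A B : Matrix m k 𝕜} (hAB : Aᴴ * B = 1) :
    (Aᴴ * S⁻¹ * A - (Bᴴ * S * B)⁻¹).PosSemidef := by
  have hBA : Bᴴ * A = 1 := by simpa using congrArg (·ᴴ) hAB
  have hB : Function.Injective B.mulVec := fun x y h => by
    simpa [mulVec_mulVec, hAB] using congrArg (Aᴴ *ᵥ ·) h
  set C := Bᴴ * S * B
  have hC : C.PosDef := hS.conjTranspose_mul_mul_same hB
  have hSdet : IsUnit S.det := (isUnit_iff_isUnit_det _).mp hS.isUnit
  have hCC : C * C⁻¹ = 1 := mul_nonsing_inv _ ((isUnit_iff_isUnit_det _).mp hC.isUnit)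
  have key : (A - S * B * C⁻¹)ᴴ * S⁻¹ * (A - S * B * C⁻¹) = Aᴴ * S⁻¹ * A - C⁻¹ := by
    simp only [conjTranspose_sub, conjTranspose_mul, conjTranspose_nonsing_inv, hS.1.eq, hC.1.eq,
      Matrix.sub_mul, Matrix.mul_sub, Matrix.mul_assoc, mul_nonsing_inv_cancel_left S _ hSdet,
      nonsing_inv_mul_cancel_left S _ hSdet]
    rw [hBA, ← Matrix.mul_assoc Aᴴ B, hAB, ← Matrix.mul_assoc S B, ← Matrix.mul_assoc Bᴴ (S * B),
      ← Matrix.mul_assoc Bᴴ S, hCC, Matrix.mul_one, Matrix.one_mul, sub_self, sub_zero]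
  exact key ▸ hS.inv.posSemidef.conjTranspose_mul_mul_same (A - S * B * C⁻¹)

end Matrix

theorem stmt_10_general (p n K : ℕ)
    (X : Matrix (Fin p) (Fin n) ℝ) (A : Matrix (Fin n) (Fin K) ℝ)
    (hX : IsUnit (Xᵀ * X)) (hA : IsUnit (Aᵀ * A)) :
    (Aᵀ * (Xᵀ * X)⁻¹ * A
      - ((A * (Aᵀ * A)⁻¹)ᵀ * (Xᵀ * X) * (A * (Aᵀ * A)⁻¹))⁻¹).PosSemidef := by
  have hS : (Xᵀ * X).PosDef := by
    simpa using (posSemidef_conjTranspose_mul_self X).posDef_iff_isUnit.mpr (by simpa using hX)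
  have hAB : Aᵀ * (A * (Aᵀ * A)⁻¹) = 1 := by
    rw [← Matrix.mul_assoc, mul_nonsing_inv _ ((isUnit_iff_isUnit_det _).mp hA)]
  simpa only [conjTranspose_eq_transpose_of_trivial] using
    hS.posSemidef_conjTranspose_mul_inv_mul_sub_inv (A := A) (by simpa using hAB)

/-- The Loewner inequality `(M̂ᵀM̂)⁻¹ ⪯ Aᵀ(XᵀX)⁻¹A`, where `M̂ = XA(AᵀA)⁻¹`. -/
theorem stmt_10 (p n K : ℕ) (hK : 0 < K) (hKn : K ≤ n) (hnp : n < p)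
    (X : Matrix (Fin p) (Fin n) ℝ) (A : Matrix (Fin n) (Fin K) ℝ)
    (hX : IsUnit (Xᵀ * X)) (hA : IsUnit (Aᵀ * A)) :
    (Aᵀ * (Xᵀ * X)⁻¹ * A
      - ((A * (Aᵀ * A)⁻¹)ᵀ * (Xᵀ * X) * (A * (Aᵀ * A)⁻¹))⁻¹).PosSemidef :=
  stmt_10_general p n K X A hX hA
end

section
/- For every γ > 0, A^⊤(X^⊤X)⁻¹X^⊤ Σ̂_γ X(X^⊤X)⁻¹A = γ · A^⊤(X^⊤X)⁻¹A, where Σ̂_γ = X(I_n − P_A)X^⊤ + γ I_p; that is, in the idealized source apportionment model the variance of the RTS estimate is proportional to γ·A^⊤(X^⊤X)⁻¹A. -/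
open Matrix

/-- In the idealized source apportionment model the variance of the RTS
estimate is proportional to `γ·Aᵀ(XᵀX)⁻¹A`:
`Aᵀ(XᵀX)⁻¹Xᵀ Σ̂_γ X(XᵀX)⁻¹A = γ • Aᵀ(XᵀX)⁻¹A`. -/
theorem stmt_12 (p n K : ℕ) (hK : 0 < K) (hKn : K ≤ n) (hnp : n < p)
    (X : Matrix (Fin p) (Fin n) ℝ) (A : Matrix (Fin n) (Fin K) ℝ)
    (hX : IsUnit (Xᵀ * X)) (hA : IsUnit (Aᵀ * A))
    (Sg : ℝ → Matrix (Fin p) (Fin p) ℝ)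
    (hSg : ∀ γ : ℝ, Sg γ = X * (1 - A * (Aᵀ * A)⁻¹ * Aᵀ) * Xᵀ
      + γ • (1 : Matrix (Fin p) (Fin p) ℝ)) :
    ∀ γ : ℝ, 0 < γ →
      Aᵀ * (Xᵀ * X)⁻¹ * Xᵀ * Sg γ * X * (Xᵀ * X)⁻¹ * A
        = γ • (Aᵀ * (Xᵀ * X)⁻¹ * A) := by
  intro γ _
  have hXinv : IsUnit (Xᵀ * X).det := (isUnit_iff_isUnit_det _).mp hX
  have hAinv : IsUnit (Aᵀ * A).det := (isUnit_iff_isUnit_det _).mp hA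
  have h1' : (Xᵀ * X) * (Xᵀ * X)⁻¹ = 1 := mul_nonsing_inv _ hXinv
  have h2 : (Aᵀ * A)⁻¹ * (Aᵀ * A) = 1 := nonsing_inv_mul _ hAinv
  have hc : Xᵀ * (X * ((Xᵀ * X)⁻¹ * A)) = A := by
    rw [← Matrix.mul_assoc, ← Matrix.mul_assoc, h1', Matrix.one_mul]
  rw [hSg]
  simp only [Matrix.mul_add, Matrix.add_mul, Matrix.mul_sub, Matrix.sub_mul,
    Matrix.mul_one, Matrix.one_mul, Matrix.mul_smul, Matrix.smul_mul,
    Matrix.mul_assoc]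
  rw [hc, h2, Matrix.mul_one, sub_self, zero_add]
end

section
/- Let Σ be a real symmetric positive definite p×p matrix, M a real p×K matrix of full column rank (K < p), and U a real p×(p−K) matrix with orthonormal columns whose column span equals the null space of M^⊤ (i.e., M^⊤U = 0 and U^⊤U = I_{p−K}). Then M^⊤Σ⁻¹M and U^⊤ΣU are invertible and I_p − M(M^⊤Σ⁻¹M)⁻¹M^⊤Σ⁻¹ = Σ U (U^⊤ Σ U)⁻¹ U^⊤. -/
/-!
Both Gram matrices are positive definite because `M` (full column rank) and `U` (orthonormal
columns) act injectively. Put `A = (MᵀΣ⁻¹M)⁻¹MᵀΣ⁻¹` and `B = (UᵀΣU)⁻¹Uᵀ`: then `AM = 1`,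
`B(ΣU) = 1`, and the cross terms `A(ΣU)`, `BM` vanish since `MᵀU = 0`. So the rows of `A`, `B`
form a left inverse of the square block matrix `[M | ΣU]`; being square, it is also a right
inverse, i.e. `MA + ΣUB = 1`, which is the identity.
-/

open Matrix

namespace Matrix

variable {m n k r R : Type*}

lemma mulVec_injective_of_rank_eq_card [Fintype n] [Field R] {A : Matrix m n R}
    (h : A.rank = Fintype.card n) : Function.Injective A.mulVec := by
  rw [mulVec_injective_iff, linearIndependent_iff_card_eq_finrank_span, Set.finrank,
    ← rank_eq_finrank_span_cols, h]

lemma mulVec_injective_of_mul_eq_one_s13 [Fintype m] [Fintype n] [DecidableEq n] [CommRing R]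
    {A : Matrix n m R} {B : Matrix m n R} (h : A * B = 1) : Function.Injective B.mulVec :=
  fun x y hxy => by simpa [mulVec_mulVec, h] using congrArg (A *ᵥ ·) hxy

lemma PosDef.transpose_mul_mul_same [Fintype m] [Fintype n] {A : Matrix n n ℝ}
    {B : Matrix n m ℝ} (hA : A.PosDef) (hB : Function.Injective B.mulVec) :
    (Bᵀ * A * B).PosDef := by
  simpa using hA.conjTranspose_mul_mul_same hB

lemma mul_add_mul_eq_one_of_biorthogonal [Fintype n] [Fintype k] [Fintype r] [DecidableEq n]
    [DecidableEq k] [DecidableEq r] [CommRing R] (e : n ≃ k ⊕ r)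
    {M : Matrix n k R} {N : Matrix n r R} {A : Matrix k n R} {B : Matrix r n R}
    (hAM : A * M = 1) (hAN : A * N = 0) (hBM : B * M = 0) (hBN : B * N = 1) :
    M * A + N * B = 1 := by
  rw [← fromCols_mul_fromRows, fromCols_mul_fromRows_eq_one_comm e, fromRows_mul_fromCols,
    hAM, hAN, hBM, hBN, fromBlocks_one]

end Matrix

theorem stmt_13_general (p K : ℕ)
    (Sg : Matrix (Fin p) (Fin p) ℝ) (hSg : Sg.PosDef)
    (M : Matrix (Fin p) (Fin K) ℝ) (hMrank : M.rank = K)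
    (U : Matrix (Fin p) (Fin (p - K)) ℝ)
    (hMU : Mᵀ * U = 0) (hUU : Uᵀ * U = 1) :
    IsUnit (Mᵀ * Sg⁻¹ * M) ∧ IsUnit (Uᵀ * Sg * U) ∧
      (1 : Matrix (Fin p) (Fin p) ℝ) - M * (Mᵀ * Sg⁻¹ * M)⁻¹ * Mᵀ * Sg⁻¹
        = Sg * U * (Uᵀ * Sg * U)⁻¹ * Uᵀ := by
  have hX : (Mᵀ * Sg⁻¹ * M).PosDef :=
    hSg.inv.transpose_mul_mul_same (mulVec_injective_of_rank_eq_card (by simpa using hMrank))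
  have hY : (Uᵀ * Sg * U).PosDef :=
    hSg.transpose_mul_mul_same (mulVec_injective_of_mul_eq_one_s13 hUU)
  refine ⟨hX.isUnit, hY.isUnit, ?_⟩
  have hUM : Uᵀ * M = 0 := by simpa using congrArg transpose hMU
  have hAM : (Mᵀ * Sg⁻¹ * M)⁻¹ * Mᵀ * Sg⁻¹ * M = 1 := by
    simpa only [Matrix.mul_assoc] using nonsing_inv_mul _ hX.det_pos.ne'.isUnit
  have hAN : (Mᵀ * Sg⁻¹ * M)⁻¹ * Mᵀ * Sg⁻¹ * (Sg * U) = 0 := by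
    rw [Matrix.mul_assoc _ Sg⁻¹, nonsing_inv_mul_cancel_left _ _ hSg.det_pos.ne'.isUnit,
      Matrix.mul_assoc, hMU, Matrix.mul_zero]
  have hBM : (Uᵀ * Sg * U)⁻¹ * Uᵀ * M = 0 := by rw [Matrix.mul_assoc, hUM, Matrix.mul_zero]
  have hBN : (Uᵀ * Sg * U)⁻¹ * Uᵀ * (Sg * U) = 1 := by
    simpa only [Matrix.mul_assoc] using nonsing_inv_mul _ hY.det_pos.ne'.isUnit
  have hKle : K ≤ p := hMrank ▸ M.rank_le_height
  have hsum := mul_add_mul_eq_one_of_biorthogonal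
    ((finCongr (Nat.add_sub_cancel' hKle)).symm.trans finSumFinEquiv.symm) hAM hAN hBM hBN
  rw [← hsum]
  simp only [Matrix.mul_assoc, add_sub_cancel_left]

/-- Projection identity: for `Σ` symmetric positive definite, `M` of full
column rank, and `U` an orthonormal basis of the null space of `Mᵀ`,
`MᵀΣ⁻¹M` and `UᵀΣU` are invertible and
`I − M(MᵀΣ⁻¹M)⁻¹MᵀΣ⁻¹ = Σ U (UᵀΣU)⁻¹ Uᵀ`. -/
theorem stmt_13 (p K : ℕ) (hK : 0 < K) (hKp : K < p)
    (Sg : Matrix (Fin p) (Fin p) ℝ) (hSg : Sg.PosDef)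
    (M : Matrix (Fin p) (Fin K) ℝ) (hMrank : M.rank = K)
    (U : Matrix (Fin p) (Fin (p - K)) ℝ)
    (hMU : Mᵀ * U = 0) (hUU : Uᵀ * U = 1) :
    IsUnit (Mᵀ * Sg⁻¹ * M) ∧ IsUnit (Uᵀ * Sg * U) ∧
      (1 : Matrix (Fin p) (Fin p) ℝ) - M * (Mᵀ * Sg⁻¹ * M)⁻¹ * Mᵀ * Sg⁻¹
        = Sg * U * (Uᵀ * Sg * U)⁻¹ * Uᵀ :=
  stmt_13_general p K Sg hSg M hMrank U hMU hUU
end
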